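/- Let T be a string of length n, let k ≥ 0 be an integer, let Q be a nonempty string with q = |Q|, and let ℓ' ≤ n be a positive integer such that hd(T[1..ℓ'], Q^∞[1..ℓ']) ≤ 2k. Suppose p is a k-mismatch period of T with p > n − ℓ' + 1, and set n' = ⌊(n−p+1)/q⌋·q. Then hd(T[p..p+n'−1], Q^∞[1..n']) ≤ 3k. -/
import Mathlib


variable {α : Type*}

/-- Hamming distance: the number of positions at which two (equal-length) strings differ. -/
def hamDist [DecidableEq α] (S T : List α) : ℕ :=
  ((S.zip T).filter fun c => decide (c.1 ≠ c.2)).length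

/-- 1-based substring `T[i..j]` (inclusive). -/
def substr (T : List α) (i j : ℕ) : List α := (T.drop (i - 1)).take (j - i + 1)

/-- `Q^m`: the concatenation of `m` copies of `Q`. -/
def listPow (Q : List α) (m : ℕ) : List α := (List.replicate m Q).flatten

/-- `Q^∞[a..b]`: the segment from position `a` through `b` (1-based) of the infinite
periodic string `Q^∞` with `Q^∞[i] = Q[((i−1) mod |Q|) + 1]`. -/
def infSeg (Q : List α) (a b : ℕ) : List α := substr (listPow Q b) a b

/-- A nonempty string is primitive if it is not a power of a strictly shorter string,
i.e. it equals `R^m` only for `m = 1`. -/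
def PrimitiveStr (Q : List α) : Prop :=
  Q ≠ [] ∧ ∀ (R : List α) (m : ℕ), Q = listPow R m → m = 1

/-- The forward cyclic rotation `rot(S) = S[m]·S[1..m−1]`. -/
def rot (S : List α) : List α := S.rotate (S.length - 1)

/-- `p` is a `k`-mismatch period of `T`: `1 ≤ p ≤ |T|` and
`hd(T[1..n−p+1], T[p..n]) ≤ k`. -/
def IsMismatchPeriod [DecidableEq α] (k p : ℕ) (T : List α) : Prop :=
  1 ≤ p ∧ p ≤ T.length ∧
    hamDist (substr T 1 (T.length - p + 1)) (substr T p T.length) ≤ k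

lemma hamDist_nil_right [DecidableEq α] (S : List α) : hamDist S [] = 0 := by
  simp [hamDist]

lemma hamDist_cons [DecidableEq α] (s t : α) (S T : List α) :
    hamDist (s::S) (t::T) = (if s = t then 0 else 1) + hamDist S T := by
  by_cases h : s = t <;> simp [hamDist, h] <;> omega

lemma hamDist_comm [DecidableEq α] (S T : List α) : hamDist S T = hamDist T S := by
  induction S generalizing T with
  | nil => simp [hamDist]
  | cons s S ih =>
    cases T with
    | nil => simp [hamDist]
    | cons t T =>
      rw [hamDist_cons, hamDist_cons, ih]
      by_cases h : s = t <;> simp [h, Ne.symm, eq_comm]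

lemma hamDist_take [DecidableEq α] (m : ℕ) (S T : List α) :
    hamDist (S.take m) (T.take m) ≤ hamDist S T := by
  unfold hamDist
  rw [List.zip, ← List.take_zipWith]
  exact ((List.take_sublist _ _).filter _).length_le

lemma hamDist_triangle [DecidableEq α] (S T U : List α)
    (h : min S.length U.length ≤ T.length) :
    hamDist S U ≤ hamDist S T + hamDist T U := by
  induction S generalizing T U with
  | nil => simp [hamDist]
  | cons s S ih =>
    cases U with
    | nil => simp [hamDist_nil_right]
    | cons u U =>
      cases T with
      | nil => simp at h
      | cons t T =>
        rw [hamDist_cons, hamDist_cons, hamDist_cons]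
        have key := ih T U (by simp at h ⊢; omega)
        by_cases hst : s = t
        · subst hst
          by_cases h2 : s = u <;> simp [h2] <;> omega
        · by_cases hsu : s = u
          · subst hsu
            simp [hst, Ne.symm hst]
            omega
          · simp [hst, hsu]; omega

lemma length_listPow (Q : List α) (m : ℕ) : (listPow Q m).length = m * Q.length := by
  simp [listPow]

/-- if `hd(T[1..ℓ'], Q^∞[1..ℓ']) ≤ 2k`, `p` is a `k`-mismatch period of
`T` with `p > n − ℓ' + 1`, and `n' = ⌊(n−p+1)/q⌋·q` (`q = |Q|`), then
`hd(T[p..p+n'−1], Q^∞[1..n']) ≤ 3k`. -/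
theorem periodic_tail_bound [DecidableEq α] (T Q : List α) (k ℓ' : ℕ)
    (hQ : Q ≠ []) (hℓ'pos : 1 ≤ ℓ') (hℓ'n : ℓ' ≤ T.length)
    (hTQ : hamDist (substr T 1 ℓ') (infSeg Q 1 ℓ') ≤ 2 * k)
    (p : ℕ) (hp : IsMismatchPeriod k p T) (hpl : T.length - ℓ' + 1 < p)
    (n' : ℕ) (hn' : n' = ((T.length - p + 1) / Q.length) * Q.length) :
    hamDist (substr T p (p + n' - 1)) (infSeg Q 1 n') ≤ 3 * k := by
  obtain ⟨hp1, hpn, hper⟩ := hp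
  set n := T.length with hn
  have hq : 1 ≤ Q.length := List.length_pos_iff.mpr hQ
  by_cases hn0 : n' = 0
  · subst hn0
    simp [infSeg, listPow, substr, hamDist]
  · have hn'1 : 1 ≤ n' := Nat.one_le_iff_ne_zero.mpr hn0
    have hn'le : n' ≤ n - p + 1 := hn' ▸ Nat.div_mul_le_self _ _
    have hn'ℓ : n' ≤ ℓ' := by omega
    have hA : substr T p (p + n' - 1) = (T.drop (p-1)).take n' := by
      unfold substr; congr 1; omega
    have hC : infSeg Q 1 n' = (listPow Q n').take n' := by
      unfold infSeg substr; simp; omega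
    -- h1 : hd (T.take n') ((T.drop (p-1)).take n') ≤ k
    have hper' : hamDist (T.take (n - p + 1)) ((T.drop (p-1)).take (n - p + 1)) ≤ k := by
      have e1 : substr T 1 (n - p + 1) = T.take (n - p + 1) := by
        unfold substr; simp
      have e2 : substr T p n = (T.drop (p-1)).take (n - p + 1) := rfl
      rw [e1, e2] at hper; exact hper
    have h1 : hamDist (T.take n') ((T.drop (p-1)).take n') ≤ k := by
      have := le_trans (hamDist_take n' (T.take (n - p + 1)) ((T.drop (p-1)).take (n - p + 1))) hper'
      rwa [List.take_take, List.take_take, min_eq_left hn'le] at this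
    -- h2 : hd (T.take n') ((listPow Q n').take n') ≤ 2k
    have h2 : hamDist (T.take n') ((listPow Q n').take n') ≤ 2 * k := by
      have e1 : substr T 1 ℓ' = T.take ℓ' := by
        unfold substr; simp; congr 1; omega
      have e2 : infSeg Q 1 ℓ' = (listPow Q ℓ').take ℓ' := by
        unfold infSeg substr; simp; omega
      rw [e1, e2] at hTQ
      have := le_trans (hamDist_take n' (T.take ℓ') ((listPow Q ℓ').take ℓ')) hTQ
      rw [List.take_take, List.take_take, min_eq_left hn'ℓ] at this
      have hsplit : listPow Q ℓ' = listPow Q n' ++ listPow Q (ℓ' - n') := by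
        unfold listPow
        rw [← List.flatten_append, ← List.replicate_add]
        congr 2; omega
      rwa [hsplit, List.take_append_of_le_length (by rw [length_listPow]; nlinarith)] at this
    rw [hA, hC]
    have htri := hamDist_triangle ((T.drop (p-1)).take n') (T.take n') ((listPow Q n').take n')
      (by simp [length_listPow])
    rw [hamDist_comm ((T.drop (p-1)).take n') (T.take n')] at htri
    omega
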